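/- Let S be an inverse semigroup, τ a congruence on E(S), and T ⊆ N(τ) a full inverse subsemigroup such that: for all x ∈ S, if there exist idempotents e, f with x⁻¹x τ e, xx⁻¹ τ f, xe ∈ T and fx ∈ T, then x ∈ T. Define ρ = { (x,y) : x⁻¹y ∈ T, x⁻¹yy⁻¹x τ x⁻¹x, y⁻¹xx⁻¹y τ y⁻¹y }. Then ρ is a left congruence on S. -/

import Mathlib

/-! Write `u = x⁻¹y`, so that `x ρ y` says `u ∈ T`, `uu⁻¹ τ x⁻¹x` and `u⁻¹u τ y⁻¹y`.
Left compatibility holds because `(cx)⁻¹(cy) = d u` for the idempotent `d = (cx)⁻¹(cx) ≤ x⁻¹x`.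
For transitivity put `v = y⁻¹z` and `w = x⁻¹z`, so that `uv = (uu⁻¹)w = w(v⁻¹v)`. Conjugating
`vv⁻¹ τ y⁻¹y` by `u ∈ N(τ)` gives `ww⁻¹·uu⁻¹ τ uu⁻¹ τ x⁻¹x`, while multiplying `uu⁻¹ τ x⁻¹x` by
`ww⁻¹ ≤ x⁻¹x` gives `ww⁻¹·uu⁻¹ τ ww⁻¹`; hence `ww⁻¹ τ x⁻¹x`, and symmetrically `w⁻¹w τ z⁻¹z`.
Now `w (v⁻¹v) = uv ∈ T` and `(uu⁻¹) w = uv ∈ T`, so the closure hypothesis on `T` gives `w ∈ T`. -/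

class InverseSemigroup (S : Type*) extends Semigroup S where
  inv : S → S
  mul_inv_mul : ∀ a : S, a * inv a * a = a
  inv_mul_inv : ∀ a : S, inv a * a * inv a = inv a
  inv_unique : ∀ a b : S, a * b * a = a → b * a * b = b → b = inv a

open InverseSemigroup

/-- `e` is an idempotent. -/
def IsIdem {S : Type*} [Mul S] (e : S) : Prop := e * e = e

/-- `r` is a left congruence: an equivalence relation compatible with left multiplication. -/
def IsLeftCongruence {S : Type*} [Semigroup S] (r : S → S → Prop) : Prop :=
  Equivalence r ∧ ∀ a b c : S, r a b → r (c * a) (c * b)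

/-- The inverse kernel of a relation: elements related to `a * a⁻¹`. -/
def InK {S : Type*} [InverseSemigroup S] (r : S → S → Prop) : Set S :=
  {a | r a (a * inv a)}

/-- The kernel: elements related to some idempotent. -/
def lker {S : Type*} [InverseSemigroup S] (r : S → S → Prop) : Set S :=
  {a | ∃ e, IsIdem e ∧ r a e}

/-- `τ` is a congruence on the semilattice of idempotents `E(S)`. -/
def IsECong {S : Type*} [InverseSemigroup S] (τ : S → S → Prop) : Prop :=
  (∀ e f, τ e f → IsIdem e ∧ IsIdem f) ∧
  (∀ e, IsIdem e → τ e e) ∧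
  (∀ e f, τ e f → τ f e) ∧
  (∀ e f g, τ e f → τ f g → τ e g) ∧
  (∀ e f g, IsIdem g → τ e f → τ (g * e) (g * f))

/-- The normaliser of a congruence on the idempotents. -/
def normaliser {S : Type*} [InverseSemigroup S] (τ : S → S → Prop) : Set S :=
  {a | ∀ e f, τ e f → τ (a * e * inv a) (a * f * inv a) ∧ τ (inv a * e * a) (inv a * f * a)}

/-- `T` is a full inverse subsemigroup of `S`. -/
def IsFullInverseSub {S : Type*} [InverseSemigroup S] (T : Set S) : Prop :=
  (∀ e : S, IsIdem e → e ∈ T) ∧ (∀ a b, a ∈ T → b ∈ T → a * b ∈ T) ∧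
  (∀ a, a ∈ T → inv a ∈ T)

namespace InverseSemigroup

variable {S : Type*} [InverseSemigroup S] {e f : S}

theorem inv_inv_eq_self (a : S) : inv (inv a) = a :=
  (inv_unique (inv a) a (inv_mul_inv a) (mul_inv_mul a)).symm

theorem isIdem_mul_inv (a : S) : IsIdem (a * inv a) := by
  rw [IsIdem, ← mul_assoc, mul_inv_mul]

theorem isIdem_inv_mul (a : S) : IsIdem (inv a * a) := by
  rw [IsIdem, ← mul_assoc, inv_mul_inv]

theorem _root_.IsIdem.inv_eq (he : IsIdem e) : inv e = e := by
  have h : e * e * e = e := by rw [he, he]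
  exact (inv_unique e e h h).symm

theorem _root_.IsIdem.mul (he : IsIdem e) (hf : IsIdem f) : IsIdem (e * f) := by
  set x := inv (e * f) with hx
  -- `f x e` is also an inverse of `e f`, and it is visibly idempotent
  have hfxe : f * x * e = x := by
    refine inv_unique (e * f) (f * x * e) ?_ ?_
    · calc e * f * (f * x * e) * (e * f) = e * (f * f) * x * ((e * e) * f) := by
            simp only [mul_assoc]
        _ = e * f * x * (e * f) := by rw [he, hf]
        _ = e * f := mul_inv_mul _
    · calc f * x * e * (e * f) * (f * x * e) = f * (x * ((e * e) * (f * f)) * x) * e := by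
            simp only [mul_assoc]
        _ = f * (x * (e * f) * x) * e := by rw [he, hf]
        _ = f * x * e := by rw [inv_mul_inv, mul_assoc]
  have hxx : IsIdem x := by
    calc x * x = f * (x * (e * f) * x) * e := by
          conv_lhs => rw [← hfxe]
          simp only [mul_assoc]
      _ = x := by rw [inv_mul_inv]; exact hfxe
  have : e * f = x := by rw [← hxx.inv_eq, hx, inv_inv_eq_self]
  rwa [this]

theorem _root_.IsIdem.mul_comm (he : IsIdem e) (hf : IsIdem f) : e * f = f * e := by
  have hfe : f * e = inv (e * f) := by
    refine inv_unique (e * f) (f * e) ?_ ?_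
    · calc e * f * (f * e) * (e * f) = (e * f) * (e * f) := by
            rw [show e * f * (f * e) * (e * f) = e * (f * f) * (e * e) * f by
              simp only [mul_assoc], he, hf, ← mul_assoc]
        _ = e * f := he.mul hf
    · calc f * e * (e * f) * (f * e) = (f * e) * (f * e) := by
            rw [show f * e * (e * f) * (f * e) = f * (e * e) * (f * f) * e by
              simp only [mul_assoc], he, hf, ← mul_assoc]
        _ = f * e := hf.mul he
  rw [hfe, (he.mul hf).inv_eq]

theorem inv_mul_rev (a b : S) : inv (a * b) = inv b * inv a := by
  have hcomm : b * inv b * (inv a * a) = inv a * a * (b * inv b) :=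
    (isIdem_mul_inv b).mul_comm (isIdem_inv_mul a)
  refine (inv_unique (a * b) (inv b * inv a) ?_ ?_).symm
  · calc a * b * (inv b * inv a) * (a * b) = a * (b * inv b * (inv a * a) * b) := by
          simp only [mul_assoc]
      _ = a * inv a * a * (b * inv b * b) := by rw [hcomm]; simp only [mul_assoc]
      _ = a * b := by rw [mul_inv_mul, mul_inv_mul]
  · calc inv b * inv a * (a * b) * (inv b * inv a)
        = inv b * (inv a * a * (b * inv b) * inv a) := by simp only [mul_assoc]
      _ = inv b * b * inv b * (inv a * a * inv a) := by rw [← hcomm]; simp only [mul_assoc]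
      _ = inv b * inv a := by rw [inv_mul_inv, inv_mul_inv]

theorem inv_inv_mul (a b : S) : inv (inv a * b) = inv b * a := by
  rw [inv_mul_rev, inv_inv_eq_self]

theorem mul_mul_inv_eq (u v : S) : u * v * inv (u * v) = u * (v * inv v) * inv u := by
  rw [inv_mul_rev]
  simp only [mul_assoc]

theorem mul_inv_inv_mul_eq (x y : S) : inv x * y * inv y * x = inv x * y * inv (inv x * y) := by
  rw [inv_inv_mul, mul_assoc (inv x * y)]

theorem mul_mul_inv_mul_mul_inv (a b : S) :
    a * b * inv (a * b) * (a * inv a) = a * b * inv (a * b) := by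
  rw [inv_mul_rev]
  calc a * b * (inv b * inv a) * (a * inv a) = a * b * inv b * (inv a * a * inv a) := by
        simp only [mul_assoc]
    _ = a * b * (inv b * inv a) := by rw [inv_mul_inv]; simp only [mul_assoc]

theorem inv_mul_mul_inv_mul_mul (a b : S) :
    inv (a * b) * (a * b) * (inv b * b) = inv (a * b) * (a * b) := by
  rw [inv_mul_rev]
  calc inv b * inv a * (a * b) * (inv b * b) = inv b * inv a * a * (b * inv b * b) := by
        simp only [mul_assoc]
    _ = inv b * inv a * (a * b) := by rw [mul_inv_mul]; simp only [mul_assoc]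

theorem _root_.IsIdem.inv_mul_mul_inv (he : IsIdem e) (s : S) :
    inv s * e * s * inv s = inv s * e := by
  calc inv s * e * s * inv s = inv s * (e * (s * inv s)) := by simp only [mul_assoc]
    _ = inv s * s * inv s * e := by rw [he.mul_comm (isIdem_mul_inv s)]; simp only [mul_assoc]
    _ = inv s * e := by rw [inv_mul_inv]

theorem _root_.IsIdem.mul_inv_mul_mul (he : IsIdem e) (s : S) : s * inv s * e * s = e * s := by
  calc s * inv s * e * s = e * (s * inv s) * s := by rw [he.mul_comm (isIdem_mul_inv s)]
    _ = e * s := by rw [mul_assoc, mul_inv_mul]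

theorem _root_.IsIdem.mul_mul_inv_mul (he : IsIdem e) (w : S) :
    e * w * inv (e * w) = w * inv w * e := by
  rw [mul_mul_inv_eq, he.inv_eq, he.mul_comm (isIdem_mul_inv w), mul_assoc, he]

theorem inv_mul_mul_inv_mul_eq_left (x y z : S) :
    inv x * y * (inv y * z) = inv x * y * inv (inv x * y) * (inv x * z) := by
  calc inv x * y * (inv y * z) = inv x * (y * inv y) * z := by simp only [mul_assoc]
    _ = inv x * (y * inv y) * x * inv x * z := by rw [(isIdem_mul_inv y).inv_mul_mul_inv x]
    _ = inv x * y * inv (inv x * y) * (inv x * z) := by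
        rw [inv_inv_mul]; simp only [mul_assoc]

theorem inv_mul_mul_inv_mul_eq_right (x y z : S) :
    inv x * y * (inv y * z) = inv x * z * (inv (inv y * z) * (inv y * z)) := by
  calc inv x * y * (inv y * z) = inv x * (y * inv y * z) := by simp only [mul_assoc]
    _ = inv x * (z * inv z * (y * inv y) * z) := by rw [(isIdem_mul_inv y).mul_inv_mul_mul z]
    _ = inv x * z * (inv (inv y * z) * (inv y * z)) := by
        rw [inv_inv_mul]; simp only [mul_assoc]

theorem inv_mul_mul_eq (c a b : S) :
    inv (c * a) * (c * b) = inv (c * a) * (c * a) * (inv a * b) := by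
  rw [inv_mul_rev]
  calc inv a * inv c * (c * b) = inv a * (inv c * c) * b := by simp only [mul_assoc]
    _ = inv a * (inv c * c) * a * inv a * b := by rw [(isIdem_inv_mul c).inv_mul_mul_inv a]
    _ = inv a * inv c * (c * a) * (inv a * b) := by simp only [mul_assoc]

end InverseSemigroup

section PairRel

open InverseSemigroup

variable {S : Type*} [InverseSemigroup S] {τ : S → S → Prop} {T : Set S}

theorem tau_mul_inv_trans (hτ : IsECong τ) (hTN : T ⊆ normaliser τ) {x y z : S}
    (hu : inv x * y ∈ T) (hxy : τ (inv x * y * inv (inv x * y)) (inv x * x))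
    (hyz : τ (inv y * z * inv (inv y * z)) (inv y * y)) :
    τ (inv x * z * inv (inv x * z)) (inv x * x) := by
  obtain ⟨-, -, τsymm, τtrans, τmul⟩ := hτ
  have hu_dom : inv x * y * (inv y * y) = inv x * y := by
    rw [mul_assoc, ← mul_assoc y, mul_inv_mul]
  have hconj : τ (inv x * z * inv (inv x * z) * (inv x * y * inv (inv x * y)))
      (inv x * y * inv (inv x * y)) := by
    have h := (hTN hu _ _ hyz).1
    rwa [← mul_mul_inv_eq, inv_mul_mul_inv_mul_eq_left, (isIdem_mul_inv _).mul_mul_inv_mul,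
      hu_dom] at h
  have hrestrict : τ (inv x * z * inv (inv x * z) * (inv x * y * inv (inv x * y)))
      (inv x * z * inv (inv x * z)) := by
    have h := τmul _ _ _ (isIdem_mul_inv (inv x * z)) hxy
    have hw := mul_mul_inv_mul_mul_inv (inv x) z
    rw [inv_inv_eq_self] at hw
    rwa [hw] at h
  exact τtrans _ _ _ (τsymm _ _ hrestrict) (τtrans _ _ _ hconj hxy)

theorem tau_mul_inv_mul_left (hτ : IsECong τ) (c : S) {a b : S}
    (h : τ (inv a * b * inv (inv a * b)) (inv a * a)) :
    τ (inv (c * a) * (c * b) * inv (inv (c * a) * (c * b))) (inv (c * a) * (c * a)) := by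
  obtain ⟨-, -, -, -, τmul⟩ := hτ
  have hg := isIdem_inv_mul (c * a)
  have h' := τmul _ _ _ hg h
  rw [inv_mul_mul_inv_mul_mul] at h'
  rwa [inv_mul_mul_eq, hg.mul_mul_inv_mul, ← hg.mul_comm (isIdem_mul_inv _)]

variable (τ T) in
def pairRel (x y : S) : Prop :=
  inv x * y ∈ T ∧ τ (inv x * y * inv y * x) (inv x * x) ∧ τ (inv y * x * inv x * y) (inv y * y)

theorem pairRel_iff {x y : S} :
    pairRel τ T x y ↔ inv x * y ∈ T ∧ τ (inv x * y * inv (inv x * y)) (inv x * x) ∧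
      τ (inv y * x * inv (inv y * x)) (inv y * y) := by
  rw [pairRel, mul_inv_inv_mul_eq, mul_inv_inv_mul_eq]

theorem pairRel_refl (hτ : IsECong τ) (hT : IsFullInverseSub T) (x : S) : pairRel τ T x x := by
  have hx : τ (inv x * x * inv x * x) (inv x * x) := by
    rw [inv_mul_inv]
    exact hτ.2.1 _ (isIdem_inv_mul x)
  exact ⟨hT.1 _ (isIdem_inv_mul x), hx, hx⟩

theorem pairRel_symm (hT : IsFullInverseSub T) {x y : S} (h : pairRel τ T x y) :
    pairRel τ T y x := by
  obtain ⟨hu, hxy, hyx⟩ := h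
  refine ⟨?_, hyx, hxy⟩
  rw [← inv_inv_mul]
  exact hT.2.2 _ hu

theorem pairRel_trans (hτ : IsECong τ) (hT : IsFullInverseSub T) (hTN : T ⊆ normaliser τ)
    (hD2 : ∀ x e f : S, IsIdem e → IsIdem f → τ (inv x * x) e → τ (x * inv x) f →
      x * e ∈ T → f * x ∈ T → x ∈ T)
    {x y z : S} (hxy : pairRel τ T x y) (hyz : pairRel τ T y z) : pairRel τ T x z := by
  rw [pairRel_iff] at hxy hyz ⊢
  obtain ⟨hu, hxy, hyx⟩ := hxy
  obtain ⟨hv, hyz, hzy⟩ := hyz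
  have hv' : inv z * y ∈ T := by
    rw [← inv_inv_mul]
    exact hT.2.2 _ hv
  have hxz := tau_mul_inv_trans hτ hTN hu hxy hyz
  have hzx := tau_mul_inv_trans hτ hTN hv' hzy hyx
  refine ⟨?_, hxz, hzx⟩
  obtain ⟨-, -, τsymm, τtrans, -⟩ := hτ
  have huv := hT.2.1 _ _ hu hv
  refine hD2 (inv x * z) (inv (inv y * z) * (inv y * z)) (inv x * y * inv (inv x * y))
    (isIdem_inv_mul _) (isIdem_mul_inv _) ?_ (τtrans _ _ _ hxz (τsymm _ _ hxy)) ?_ ?_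
  · simpa only [inv_inv_mul] using τtrans _ _ _ hzx (τsymm _ _ hzy)
  · rwa [← inv_mul_mul_inv_mul_eq_right]
  · rwa [← inv_mul_mul_inv_mul_eq_left]

theorem pairRel_mul_left (hτ : IsECong τ) (hT : IsFullInverseSub T) {a b : S} (c : S)
    (h : pairRel τ T a b) : pairRel τ T (c * a) (c * b) := by
  rw [pairRel_iff] at h ⊢
  obtain ⟨hu, hab, hba⟩ := h
  refine ⟨?_, tau_mul_inv_mul_left hτ c hab, tau_mul_inv_mul_left hτ c hba⟩
  rw [inv_mul_mul_eq]
  exact hT.2.1 _ _ (hT.1 _ (isIdem_inv_mul _)) hu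

end PairRel

theorem stmt5 {S : Type*} [InverseSemigroup S] (τ : S → S → Prop) (T : Set S)
    (hτ : IsECong τ) (hT : IsFullInverseSub T) (hTN : T ⊆ normaliser τ)
    (hD2 : ∀ x e f : S, IsIdem e → IsIdem f → τ (inv x * x) e → τ (x * inv x) f →
      x * e ∈ T → f * x ∈ T → x ∈ T) :
    IsLeftCongruence (fun x y =>
      inv x * y ∈ T ∧ τ (inv x * y * inv y * x) (inv x * x) ∧
        τ (inv y * x * inv x * y) (inv y * y)) :=
  ⟨⟨pairRel_refl hτ hT, pairRel_symm hT, pairRel_trans hτ hT hTN hD2⟩,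
    fun _ _ c => pairRel_mul_left hτ hT c⟩
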